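/- (Gradient position observer, Proposition 2, transient-free form.) Let α > 0, γ > 0, let Ω, v : ℝ → EuclideanSpace ℝ (Fin 3) be continuous, and let z : ℝ → EuclideanSpace ℝ (Fin 3) be differentiable with z(t) ≠ 0 and z'(t) = −Ω(t) ×₃ z(t) − v(t) for all t ≥ 0. Set y(t) := ‖z(t)‖⁻¹ • z(t). Suppose x̄, p₂, q : ℝ → EuclideanSpace ℝ (Fin 3) are differentiable and satisfy for all t ≥ 0: x̄'(t) = −α x̄(t) + α² • y(t) with x̄(0) = α • y(0); p₂'(t) = −α p₂(t) + α • (Ω(t) ×₃ y(t)) with p₂(0) = 0; and, with φ(t) := α • y(t) − x̄(t) + p₂(t), q'(t) = −α q(t) + ⟪y(t), v(t)⟫ • φ(t) + α • (v(t) − ⟪y(t), v(t)⟫ • y(t)) with q(0) = 0. Assume there exist T > 0 and δ > 0 such that ∫_t^{t+T} ‖φ(s)‖² ds ≥ δ for all t ≥ 0. If r̂ : ℝ → ℝ is differentiable with r̂'(t) = −⟪y(t), v(t)⟫ − γ ⟪φ(t), r̂(t) • φ(t) + q(t)⟫ for all t ≥ 0, then ‖r̂(t) • y(t) − z(t)‖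 ≤ |r̂(0) − ‖z(0)‖| · exp(γδ) · exp(−(γδ/T) t) for all t ≥ 0. -/

import Mathlib

open scoped RealInnerProductSpace

/-- Cross product on `EuclideanSpace ℝ (Fin 3)`, transported from Mathlib's
`crossProduct` on `Fin 3 → ℝ`. -/
noncomputable def cross3 (a b : EuclideanSpace ℝ (Fin 3)) : EuclideanSpace ℝ (Fin 3) :=
  (WithLp.equiv 2 (Fin 3 → ℝ)).symm
    (crossProduct ((WithLp.equiv 2 (Fin 3 → ℝ)) a) ((WithLp.equiv 2 (Fin 3 → ℝ)) b))

/-!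
Write `r = ‖z‖`, so that `z = r • y` and, since `Ω × z ⊥ z`, `r' = -⟪y, v⟫`. The combination
`ψ = α • z - r • x̄ + r • p₂ + q` equals `r • φ + q` and satisfies `ψ' = -α ψ`, `ψ 0 = 0`; hence
`q = -r • φ`, i.e. the filters turn the unknown range into a linear regression. The error
`e = r̂ - r` then obeys `e' = -γ ‖φ‖² e`, so `e t = e 0 * exp (-γ ∫₀ᵗ ‖φ‖²)`, and persistency of
excitation bounds that integral below by `δ (t / T - 1)`. Finally `‖r̂ • y - z‖ = |e|` as `‖y‖ = 1`.
-/

open Set Real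

lemma inner_cross3_self (a b : EuclideanSpace ℝ (Fin 3)) : ⟪a, cross3 b a⟫ = 0 := by
  simpa [cross3, PiLp.inner_apply, dotProduct, mul_comm] using dot_cross_self (b : Fin 3 → ℝ) a

lemma cross3_smul_right (c : ℝ) (a b : EuclideanSpace ℝ (Fin 3)) :
    cross3 a (c • b) = c • cross3 a b := by
  simp [cross3]

section InnerProductSpace

variable {F : Type*} [NormedAddCommGroup F] [InnerProductSpace ℝ F]

theorem HasDerivAt.norm {f : ℝ → F} {f' : F} {x : ℝ} (hf : HasDerivAt f f' x) (h0 : f x ≠ 0) :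
    HasDerivAt (‖f ·‖) ⟪‖f x‖⁻¹ • f x, f'⟫ x := by
  have hsq : (fun u => ‖f u‖ ^ 2) x ≠ 0 := by simpa using h0
  convert hf.norm_sq.sqrt hsq using 1
  · funext u
    exact (sqrt_sq (norm_nonneg _)).symm
  · rw [sqrt_sq (norm_nonneg _), real_inner_smul_left]
    field_simp

theorem norm_smul_inv_norm_smul_sub (c : ℝ) {x : F} (hx : x ≠ 0) :
    ‖c • (‖x‖⁻¹ • x) - x‖ = |c - ‖x‖| := by
  have hsplit : c • (‖x‖⁻¹ • x) - x = (c - ‖x‖) • (‖x‖⁻¹ • x) := by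
    rw [sub_smul, smul_inv_smul₀ (norm_ne_zero_iff.2 hx)]
  rw [hsplit, norm_smul, norm_smul, norm_inv, norm_norm,
    inv_mul_cancel₀ (norm_ne_zero_iff.2 hx), mul_one, Real.norm_eq_abs]

theorem continuousOn_inv_norm_smul {z : ℝ → F} (hz : Continuous z) :
    ContinuousOn (fun s => ‖z s‖⁻¹ • z s) {s | z s ≠ 0} :=
  (hz.norm.continuousOn.inv₀ fun _ hs => norm_ne_zero_iff.2 hs).smul hz.continuousOn

theorem hasDerivAt_sub_of_gradient_law {r r' : ℝ → ℝ} {φ q : F} {c γ t : ℝ}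
    (hr : HasDerivAt r c t) (hr' : HasDerivAt r' (c - γ * ⟪φ, r' t • φ + q⟫) t)
    (hq : r t • φ + q = 0) :
    HasDerivAt (fun s => r' s - r s) (-(γ * ‖φ‖ ^ 2) • (r' t - r t)) t := by
  have hq' : r' t • φ + q = (r' t - r t) • φ := by
    linear_combination (norm := module) hq
  refine (hr'.sub hr).congr_deriv ?_
  rw [hq', real_inner_smul_right, real_inner_self_eq_norm_sq, smul_eq_mul]
  ring

end InnerProductSpace

theorem eq_exp_smul_of_hasDerivAt_neg_smul {E : Type*} [NormedAddCommGroup E] [NormedSpace ℝ E]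
    {x : ℝ → E} {g G : ℝ → ℝ} {a b : ℝ} (hab : a ≤ b)
    (hG : ∀ s ∈ Icc a b, HasDerivAt G (g s) s) (hx : ∀ s ∈ Icc a b, HasDerivAt x (-g s • x s) s) :
    x b = exp (G a - G b) • x a := by
  have hderiv : ∀ s ∈ Icc a b, HasDerivAt (fun u => exp (G u) • x u) 0 s := by
    intro s hs
    refine ((hG s hs).exp.smul (hx s hs)).congr_deriv ?_
    module
  have hconst := constant_of_has_deriv_right_zero
    (fun s hs => (hderiv s hs).continuousAt.continuousWithinAt)
    (fun s hs => (hderiv s (Ico_subset_Icc_self hs)).hasDerivWithinAt) b ⟨hab, le_rfl⟩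
  rw [sub_eq_add_neg, exp_add, mul_comm, ← smul_smul, ← hconst, smul_smul, ← exp_add,
    neg_add_cancel, exp_zero, one_smul]

theorem hasDerivAt_norm_of_hasDerivAt_neg_cross3_sub {z : ℝ → EuclideanSpace ℝ (Fin 3)}
    {ω w : EuclideanSpace ℝ (Fin 3)} {t : ℝ} (hz : HasDerivAt z (-cross3 ω (z t) - w) t)
    (h0 : z t ≠ 0) : HasDerivAt (‖z ·‖) (-⟪‖z t‖⁻¹ • z t, w⟫) t := by
  refine (hz.norm h0).congr_deriv ?_
  rw [inner_sub_right, inner_neg_right, real_inner_smul_left (z t), inner_cross3_self]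
  ring

theorem hasDerivAt_integral_of_continuousOn {E : Type*} [NormedAddCommGroup E] [NormedSpace ℝ E]
    [CompleteSpace E] {f : ℝ → E} {U : Set ℝ} (hU : IsOpen U) (hf : ContinuousOn f U) {a b : ℝ}
    (hab : uIcc a b ⊆ U) : HasDerivAt (fun u => ∫ s in a..u, f s) (f b) b :=
  have hb : b ∈ U := hab right_mem_uIcc
  intervalIntegral.integral_hasDerivAt_right ((hf.mono hab).intervalIntegrable)
    (hf.stronglyMeasurableAtFilter hU b hb) (hf.continuousAt (hU.mem_nhds hb))

section PersistentExcitation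

variable {f : ℝ → ℝ} {T δ : ℝ}

theorem natCast_mul_le_integral_of_forall_le_integral (hf : ContinuousOn f (Ici 0))
    (hPE : ∀ t ≥ 0, δ ≤ ∫ s in t..t + T, f s) (hT : 0 ≤ T) (n : ℕ) :
    n * δ ≤ ∫ s in 0..n * T, f s := by
  induction n with
  | zero => simp
  | succ n ih =>
    have hnT : 0 ≤ n * T := by positivity
    have hint : ∀ a b, 0 ≤ a → a ≤ b → IntervalIntegrable f MeasureTheory.volume a b :=
      fun a b ha hab => (hf.mono fun s hs => ha.trans hs.1).intervalIntegrable_of_Icc hab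
    rw [Nat.cast_succ, add_mul, one_mul, add_one_mul,
      ← intervalIntegral.integral_add_adjacent_intervals (hint 0 _ le_rfl hnT)
        (hint _ _ hnT (le_add_of_nonneg_right hT))]
    linarith [hPE _ hnT]

theorem mul_sub_one_le_integral_of_forall_le_integral (hf : ContinuousOn f (Ici 0))
    (hf0 : ∀ s ≥ 0, 0 ≤ f s) (hPE : ∀ t ≥ 0, δ ≤ ∫ s in t..t + T, f s) (hT : 0 < T)
    (hδ : 0 ≤ δ) {t : ℝ} (ht : 0 ≤ t) : δ * (t / T - 1) ≤ ∫ s in 0..t, f s := by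
  set n := ⌊t / T⌋₊
  have hnT : n * T ≤ t := (le_div_iff₀ hT).1 (Nat.floor_le (div_nonneg ht hT.le))
  calc δ * (t / T - 1) ≤ n * δ := by
        nlinarith [Nat.lt_floor_add_one (t / T)]
    _ ≤ ∫ s in 0..n * T, f s := natCast_mul_le_integral_of_forall_le_integral hf hPE hT.le n
    _ ≤ ∫ s in 0..t, f s :=
        intervalIntegral.integral_mono_interval le_rfl (by positivity) hnT
          ((MeasureTheory.ae_restrict_iff' measurableSet_Ioc).2
            (Filter.Eventually.of_forall fun s hs => hf0 s hs.1.le))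
          ((hf.mono fun s hs => hs.1).intervalIntegrable_of_Icc ht)

end PersistentExcitation

theorem smul_regressor_add_eq_zero {α : ℝ} {Ω v z y xb p₂ q φ : ℝ → EuclideanSpace ℝ (Fin 3)}
    {r : ℝ → ℝ}
    (hz : ∀ t ≥ 0, HasDerivAt z (-cross3 (Ω t) (z t) - v t) t)
    (hr : ∀ t ≥ 0, HasDerivAt r (-⟪y t, v t⟫) t) (hzy : ∀ t ≥ 0, z t = r t • y t)
    (hxb : ∀ t ≥ 0, HasDerivAt xb ((-α) • xb t + (α ^ 2) • y t) t) (hxb0 : xb 0 = α • y 0)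
    (hp₂ : ∀ t ≥ 0, HasDerivAt p₂ ((-α) • p₂ t + α • cross3 (Ω t) (y t)) t) (hp₂0 : p₂ 0 = 0)
    (hφ : φ = fun t => α • y t - xb t + p₂ t)
    (hq : ∀ t ≥ 0, HasDerivAt q ((-α) • q t + ⟪y t, v t⟫ • φ t + α • (v t - ⟪y t, v t⟫ • y t)) t)
    (hq0 : q 0 = 0) :
    ∀ t ≥ 0, r t • φ t + q t = 0 := by
  subst hφ
  intro t ht
  -- `ψ = r • φ + q`, written so as to avoid the derivative of the bearing `y`.
  set ψ := fun s => α • z s - r s • xb s + r s • p₂ s + q s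
  have hψ : ∀ s ∈ Icc 0 t, HasDerivAt ψ (-α • ψ s) s := by
    rintro s ⟨hs, -⟩
    refine ((((hz s hs).const_smul α).sub ((hr s hs).smul (hxb s hs))).add
      ((hr s hs).smul (hp₂ s hs))).add (hq s hs) |>.congr_deriv ?_
    simp only [ψ, hzy s hs, cross3_smul_right]
    module
  have hψ0 : ψ 0 = 0 := by
    simp only [ψ, hzy 0 le_rfl, hxb0, hp₂0, hq0]
    module
  have key := eq_exp_smul_of_hasDerivAt_neg_smul ht (fun s _ => hasDerivAt_mul_const α) hψ
  rw [hψ0, smul_zero] at key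
  simp only [ψ, hzy t ht] at key
  rw [← key]
  module

theorem stmt6_general (α γ : ℝ) (hγ : 0 < γ)
    (Ω v : ℝ → EuclideanSpace ℝ (Fin 3))
    (z : ℝ → EuclideanSpace ℝ (Fin 3))
    (hz : Differentiable ℝ z)
    (hz0 : ∀ t ≥ (0:ℝ), z t ≠ 0)
    (hzd : ∀ t ≥ (0:ℝ), deriv z t = -cross3 (Ω t) (z t) - v t)
    (y : ℝ → EuclideanSpace ℝ (Fin 3)) (hy : y = fun t => ‖z t‖⁻¹ • z t)
    (xb p₂ q : ℝ → EuclideanSpace ℝ (Fin 3))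
    (hxb : Differentiable ℝ xb)
    (hxbd : ∀ t ≥ (0:ℝ), deriv xb t = (-α) • xb t + (α ^ 2) • y t)
    (hxb0 : xb 0 = α • y 0)
    (hp₂ : Differentiable ℝ p₂)
    (hp₂d : ∀ t ≥ (0:ℝ), deriv p₂ t = (-α) • p₂ t + α • cross3 (Ω t) (y t))
    (hp₂0 : p₂ 0 = 0)
    (φ : ℝ → EuclideanSpace ℝ (Fin 3)) (hφ : φ = fun t => α • y t - xb t + p₂ t)
    (hq : Differentiable ℝ q)
    (hqd : ∀ t ≥ (0:ℝ), deriv q t =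
      (-α) • q t + ⟪y t, v t⟫ • φ t + α • (v t - ⟪y t, v t⟫ • y t))
    (hq0 : q 0 = 0)
    (T δ : ℝ) (hT : 0 < T) (hδ : 0 < δ)
    (hPE : ∀ t ≥ (0:ℝ), δ ≤ ∫ s in t..(t + T), ‖φ s‖ ^ 2)
    (rhat : ℝ → ℝ) (hrhat : Differentiable ℝ rhat)
    (hrhatd : ∀ t ≥ (0:ℝ),
      deriv rhat t = -⟪y t, v t⟫ - γ * ⟪φ t, rhat t • φ t + q t⟫) :
    ∀ t ≥ (0:ℝ),
      ‖rhat t • y t - z t‖ ≤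
        |rhat 0 - ‖z 0‖| * Real.exp (γ * δ) * Real.exp (-(γ * δ / T) * t) := by
  have hz_ode (t) (ht : 0 ≤ t) := hzd t ht ▸ (hz t).hasDerivAt
  have hr (t) (ht : 0 ≤ t) := hasDerivAt_norm_of_hasDerivAt_neg_cross3_sub (hz_ode t ht) (hz0 t ht)
  subst hy
  have hfilter := smul_regressor_add_eq_zero hz_ode hr
    (fun t ht => (smul_inv_smul₀ (norm_ne_zero_iff.2 (hz0 t ht)) _).symm)
    (fun t ht => hxbd t ht ▸ (hxb t).hasDerivAt) hxb0 (fun t ht => hp₂d t ht ▸ (hp₂ t).hasDerivAt)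
    hp₂0 hφ (fun t ht => hqd t ht ▸ (hq t).hasDerivAt) hq0
  have hU : IsOpen {s | z s ≠ 0} := isOpen_ne.preimage hz.continuous
  have hφc : ContinuousOn (fun s => ‖φ s‖ ^ 2) {s | z s ≠ 0} := by
    refine ContinuousOn.pow (ContinuousOn.norm ?_) 2
    rw [hφ]
    exact (((continuousOn_const (c := α)).smul (continuousOn_inv_norm_smul hz.continuous)).sub
      hxb.continuous.continuousOn).add hp₂.continuous.continuousOn
  have he (s) (hs : 0 ≤ s) := hasDerivAt_sub_of_gradient_law (hr s hs)
    (hrhatd s hs ▸ (hrhat s).hasDerivAt) (hfilter s hs)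
  intro t ht
  beta_reduce
  have hexp := eq_exp_smul_of_hasDerivAt_neg_smul ht
    (fun s hs => (hasDerivAt_integral_of_continuousOn (a := 0) hU hφc
      fun u hu => hz0 u (uIcc_of_le hs.1 ▸ hu).1).const_mul γ) (fun s hs => he s hs.1)
  have hI := mul_sub_one_le_integral_of_forall_le_integral (hφc.mono hz0)
    (fun s _ => sq_nonneg _) hPE hT hδ.le ht
  rw [norm_smul_inv_norm_smul_sub _ (hz0 t ht), hexp, smul_eq_mul, abs_mul, abs_of_pos (exp_pos _),
    intervalIntegral.integral_same, mul_zero, zero_sub, mul_comm, mul_assoc, ← exp_add]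
  gcongr
  have hrate : γ * (δ * (t / T - 1)) = γ * δ / T * t - γ * δ := by field_simp
  linarith [mul_le_mul_of_nonneg_left hI hγ.le]

/-- Gradient position observer (Proposition 2, transient-free form): under
persistency of excitation of the regressor `φ`, the estimate `ẑ = r̂ • y`
converges to `z` globally exponentially. -/
theorem stmt6 (α γ : ℝ) (hα : 0 < α) (hγ : 0 < γ)
    (Ω v : ℝ → EuclideanSpace ℝ (Fin 3)) (hΩ : Continuous Ω) (hv : Continuous v)
    (z : ℝ → EuclideanSpace ℝ (Fin 3))
    (hz : Differentiable ℝ z)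
    (hz0 : ∀ t ≥ (0:ℝ), z t ≠ 0)
    (hzd : ∀ t ≥ (0:ℝ), deriv z t = -cross3 (Ω t) (z t) - v t)
    (y : ℝ → EuclideanSpace ℝ (Fin 3)) (hy : y = fun t => ‖z t‖⁻¹ • z t)
    (xb p₂ q : ℝ → EuclideanSpace ℝ (Fin 3))
    (hxb : Differentiable ℝ xb)
    (hxbd : ∀ t ≥ (0:ℝ), deriv xb t = (-α) • xb t + (α ^ 2) • y t)
    (hxb0 : xb 0 = α • y 0)
    (hp₂ : Differentiable ℝ p₂)
    (hp₂d : ∀ t ≥ (0:ℝ), deriv p₂ t = (-α) • p₂ t + α • cross3 (Ω t) (y t))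
    (hp₂0 : p₂ 0 = 0)
    (φ : ℝ → EuclideanSpace ℝ (Fin 3)) (hφ : φ = fun t => α • y t - xb t + p₂ t)
    (hq : Differentiable ℝ q)
    (hqd : ∀ t ≥ (0:ℝ), deriv q t =
      (-α) • q t + ⟪y t, v t⟫ • φ t + α • (v t - ⟪y t, v t⟫ • y t))
    (hq0 : q 0 = 0)
    (T δ : ℝ) (hT : 0 < T) (hδ : 0 < δ)
    (hPE : ∀ t ≥ (0:ℝ), δ ≤ ∫ s in t..(t + T), ‖φ s‖ ^ 2)
    (rhat : ℝ → ℝ) (hrhat : Differentiable ℝ rhat)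
    (hrhatd : ∀ t ≥ (0:ℝ),
      deriv rhat t = -⟪y t, v t⟫ - γ * ⟪φ t, rhat t • φ t + q t⟫) :
    ∀ t ≥ (0:ℝ),
      ‖rhat t • y t - z t‖ ≤
        |rhat 0 - ‖z 0‖| * Real.exp (γ * δ) * Real.exp (-(γ * δ / T) * t) :=
  stmt6_general α γ hγ Ω v z hz hz0 hzd y hy xb p₂ q hxb hxbd hxb0 hp₂ hp₂d hp₂0 φ hφ hq hqd hq0 T δ
    hT hδ hPE rhat hrhat hrhatd
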